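/- Let X = {x_1,...,x_k} be distinct complex numbers. For a prime p and j ≥ 1, G_X(s,p^j) = (∏_{i=1}^k (1 - p^{-s-x_i})) · (1/(p-1)) · ∑_{i=1}^k (p^{1 - x_i j} - p^{s - x_i (j-1)}) (1 - p^{-x_i - s})^{-1} ∏_{l ≠ i} (1 - p^{x_i - x_l})^{-1}. -/

import Mathlib

open Finset ArithmeticFunction

/-- The arithmetic function `n ↦ n^{-x}` (and `0 ↦ 0`). -/
noncomputable def powFn (x : ℂ) : ArithmeticFunction ℂ :=
  ⟨fun n => if n = 0 then 0 else (n : ℂ) ^ (-x), by simp⟩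

/-- `σ_X(n)`, the `k`-fold Dirichlet convolution of `n ↦ n^{-x_i}`. -/
noncomputable def sigmaX (k : ℕ) (x : Fin k → ℂ) : ArithmeticFunction ℂ :=
  ∏ i : Fin k, powFn (x i)

/-- `g_X(s,n)`, multiplicative, with
`g_X(s,p^α) = (∑_{j≥0} σ_X(p^{j+α})p^{-js}) / (∑_{j≥0} σ_X(p^j)p^{-js})`. -/
noncomputable def gX (k : ℕ) (x : Fin k → ℂ) (s : ℂ) (n : ℕ) : ℂ :=
  ∏ p ∈ n.primeFactors,
    (∑' j : ℕ, sigmaX k x (p ^ (j + n.factorization p)) * (p : ℂ) ^ (-(j : ℂ) * s)) /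
      (∑' j : ℕ, sigmaX k x (p ^ j) * (p : ℂ) ^ (-(j : ℂ) * s))

/-- `G_X(s,n) = ∑_{d|n} (μ(d) d^s / φ(d)) ∑_{e|d} (μ(e)/e^s) g_X(s, ne/d)`. -/
noncomputable def GX (k : ℕ) (x : Fin k → ℂ) (s : ℂ) (n : ℕ) : ℂ :=
  ∑ d ∈ n.divisors,
    ((moebius d : ℂ) * (d : ℂ) ^ s / (Nat.totient d : ℂ)) *
      ∑ e ∈ d.divisors, ((moebius e : ℂ) / (e : ℂ) ^ s) * gX k x s (n * e / d)

lemma powFn_prime_pow (x : ℂ) {p : ℕ} (hp : p ≠ 0) (m : ℕ) :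
    powFn x (p ^ m) = ((p : ℂ) ^ (-x)) ^ m := by
  have h : p ^ m ≠ 0 := pow_ne_zero _ hp
  show (if p ^ m = 0 then 0 else ((p ^ m : ℕ) : ℂ) ^ (-x)) = _
  rw [if_neg h]
  push_cast
  rw [← Complex.natCast_cpow_natCast_mul, Complex.cpow_nat_mul]

lemma mul_apply_prime_pow (f g : ArithmeticFunction ℂ) {p : ℕ} (hp : p.Prime) (m : ℕ) :
    (f * g) (p ^ m) = ∑ b ∈ range (m + 1), f (p ^ b) * g (p ^ (m - b)) := by
  rw [ArithmeticFunction.mul_apply,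
    Nat.sum_divisorsAntidiagonal (f := fun a b => f a * g b),
    Nat.sum_divisors_prime_pow hp]
  exact Finset.sum_congr rfl fun b hb => by
    rw [Nat.pow_div (Nat.lt_succ_iff.mp (mem_range.mp hb)) hp.pos]

lemma erase_univ_zero (k : ℕ) :
    (univ : Finset (Fin (k + 1))).erase 0 = univ.map ⟨Fin.succ, Fin.succ_injective k⟩ := by
  rw [Fin.univ_succ, Finset.erase_cons]

lemma prod_erase_zero (k : ℕ) (g : Fin (k + 1) → ℂ) :
    ∏ l ∈ (univ : Finset (Fin (k + 1))).erase 0, g l = ∏ i : Fin k, g i.succ := by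
  rw [erase_univ_zero, Finset.prod_map]; rfl

lemma prod_erase_succ (k : ℕ) (i : Fin k) (g : Fin (k + 1) → ℂ) :
    ∏ l ∈ (univ : Finset (Fin (k + 1))).erase i.succ, g l
      = g 0 * ∏ l ∈ univ.erase i, g l.succ := by
  have h : (univ : Finset (Fin (k + 1))).erase i.succ
      = insert 0 ((univ.erase i).map ⟨Fin.succ, Fin.succ_injective k⟩) := by
    ext l
    simp only [Finset.mem_erase, Finset.mem_univ, and_true, Finset.mem_insert,
      Finset.mem_map, Function.Embedding.coeFn_mk]
    constructor
    · intro hl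
      rcases Fin.eq_zero_or_eq_succ l with rfl | ⟨a, rfl⟩
      · exact Or.inl rfl
      · exact Or.inr ⟨a, fun h => hl (by rw [h]), rfl⟩
    · rintro (rfl | ⟨a, ha, rfl⟩)
      · exact (Fin.succ_ne_zero i).symm
      · exact fun h => ha (Fin.succ_injective _ h)
  rw [h, Finset.prod_insert (by simp), Finset.prod_map]
  rfl

lemma lagrange_sum (k : ℕ) (hk : 0 < k) (z : Fin k → ℂ) (hz : Function.Injective z) :
    ∑ i : Fin k, z i ^ (k - 1) * ∏ l ∈ univ.erase i, ((z i - z l)⁻¹ * (1 - z l)) = 1 := by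
  classical
  have hinj : Set.InjOn z (univ : Finset (Fin k)) := hz.injOn
  have hdeg : (Polynomial.X ^ (k - 1) : Polynomial ℂ).degree
      < (univ : Finset (Fin k)).card := by
    rw [Polynomial.degree_X_pow, Finset.card_univ, Fintype.card_fin]
    exact_mod_cast Nat.sub_lt hk one_pos
  have H := Lagrange.eq_interpolate (s := univ) (v := z) hinj hdeg
  have H1 := congrArg (Polynomial.eval 1) H
  rw [Polynomial.eval_pow, Polynomial.eval_X, one_pow, Lagrange.interpolate_apply,
    Polynomial.eval_finset_sum] at H1
  refine Eq.trans (Finset.sum_congr rfl fun i _ => ?_) H1.symm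
  rw [Polynomial.eval_mul, Polynomial.eval_C, Polynomial.eval_pow, Polynomial.eval_X,
    Lagrange.basis, Polynomial.eval_prod]
  congr 1
  refine Finset.prod_congr rfl fun l _ => ?_
  rw [Lagrange.basisDivisor, Polynomial.eval_mul, Polynomial.eval_C, Polynomial.eval_sub,
    Polynomial.eval_X, Polynomial.eval_C]

lemma lemB (k : ℕ) (hk : 0 < k) (z : Fin k → ℂ) (h0 : ∀ i, z i ≠ 0)
    (hinj : Function.Injective z) (h1 : ∀ i, z i ≠ 1) :
    ∑ i : Fin k, (1 - z i)⁻¹ * ∏ l ∈ univ.erase i, (1 - z l / z i)⁻¹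
      = ∏ i : Fin k, (1 - z i)⁻¹ := by
  have hz1 : ∀ i, (1 : ℂ) - z i ≠ 0 := fun i => sub_ne_zero.mpr fun h => h1 i h.symm
  have hProd : ∏ i : Fin k, ((1 : ℂ) - z i) ≠ 0 :=
    Finset.prod_ne_zero_iff.mpr fun i _ => hz1 i
  have key := lagrange_sum k hk z hinj
  apply mul_right_cancel₀ hProd
  rw [Finset.sum_mul]
  have rhs : (∏ i : Fin k, (1 - z i)⁻¹) * ∏ i : Fin k, (1 - z i) = 1 := by
    rw [← Finset.prod_mul_distrib]
    exact Finset.prod_eq_one fun i _ => inv_mul_cancel₀ (hz1 i)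
  rw [rhs]
  refine Eq.trans (Finset.sum_congr rfl fun i _ => ?_) key
  rw [← Finset.mul_prod_erase univ (fun l => (1 : ℂ) - z l) (mem_univ i)]
  have hc : ∀ l, ((1 : ℂ) - z l / z i)⁻¹ = z i * (z i - z l)⁻¹ := by
    intro l
    rcases eq_or_ne (z i) (z l) with h | h
    · rw [← h, div_self (h0 i)]; simp
    · have e1 : (1 : ℂ) - z l / z i = (z i - z l) / z i := by
        rw [sub_div, div_self (h0 i)]
      rw [e1, inv_div, div_eq_mul_inv]
  calc (1 - z i)⁻¹ * (∏ l ∈ univ.erase i, (1 - z l / z i)⁻¹)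
      * ((1 - z i) * ∏ l ∈ univ.erase i, (1 - z l))
      = ((1 - z i)⁻¹ * (1 - z i)) *
        ((∏ l ∈ univ.erase i, (1 - z l / z i)⁻¹) * ∏ l ∈ univ.erase i, (1 - z l)) := by
        ring
    _ = ∏ l ∈ univ.erase i, ((1 - z l / z i)⁻¹ * (1 - z l)) := by
        rw [inv_mul_cancel₀ (hz1 i), one_mul, Finset.prod_mul_distrib]
    _ = ∏ l ∈ univ.erase i, (z i * ((z i - z l)⁻¹ * (1 - z l))) := by
        refine Finset.prod_congr rfl fun l _ => ?_
        rw [hc l]; ring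
    _ = z i ^ (k - 1) * ∏ l ∈ univ.erase i, ((z i - z l)⁻¹ * (1 - z l)) := by
        rw [Finset.prod_mul_distrib, Finset.prod_const,
          Finset.card_erase_of_mem (mem_univ i), Finset.card_univ, Fintype.card_fin]

lemma inv_one_sub_div {a b : ℂ} (hb : b ≠ 0) : ((1 : ℂ) - a / b)⁻¹ = b * (b - a)⁻¹ := by
  rw [show (1 : ℂ) - a / b = (b - a) / b from by rw [sub_div, div_self hb], inv_div,
    div_eq_mul_inv]

lemma lemStep (k : ℕ) (hk : 1 ≤ k) (y : Fin (k + 1) → ℂ) (h0 : ∀ i, y i ≠ 0)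
    (hne : ∀ i l, i ≠ l → y i ≠ y l) (m : ℕ) :
    ∑ b ∈ range (m + 1), y 0 ^ b *
        (∑ i : Fin k, y i.succ ^ (m - b) * ∏ l ∈ univ.erase i, (1 - y l.succ / y i.succ)⁻¹)
      = ∑ i : Fin (k + 1), y i ^ m * ∏ l ∈ univ.erase i, (1 - y l / y i)⁻¹ := by
  classical
  set c : Fin k → ℂ := fun i => ∏ l ∈ univ.erase i, (1 - y l.succ / y i.succ)⁻¹ with hc
  have hne0 : ∀ i : Fin k, y 0 - y i.succ ≠ 0 := fun i =>
    sub_ne_zero.mpr (hne 0 i.succ (Fin.succ_ne_zero i).symm)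
  have hne0' : ∀ i : Fin k, y i.succ - y 0 ≠ 0 := fun i =>
    sub_ne_zero.mpr (hne i.succ 0 (Fin.succ_ne_zero i))
  -- part 1 : via lemB
  have part1 : ∑ i : Fin k, y 0 ^ (m + 1) * (y 0 - y i.succ)⁻¹ * c i
      = y 0 ^ m * ∏ l ∈ (univ : Finset (Fin (k + 1))).erase 0, (1 - y l / y 0)⁻¹ := by
    set z : Fin k → ℂ := fun i => y i.succ / y 0 with hz
    have hz0 : ∀ i, z i ≠ 0 := fun i => div_ne_zero (h0 _) (h0 0)
    have hzinj : Function.Injective z := by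
      intro a b e
      have e' : y a.succ = y b.succ := by
        have := congrArg (· * y 0) e
        simpa [hz, div_mul_cancel₀ _ (h0 0)] using this
      by_contra hab
      exact hne a.succ b.succ (fun h => hab (Fin.succ_injective k h)) e'
    have hz1 : ∀ i, z i ≠ 1 := fun i e =>
      hne i.succ 0 (Fin.succ_ne_zero i) ((div_eq_one_iff_eq (h0 0)).mp e)
    have hB := lemB k hk z hz0 hzinj hz1
    have hzz : ∀ i l : Fin k, z l / z i = y l.succ / y i.succ := by
      intro i l
      exact div_div_div_cancel_right₀ (h0 0) _ _
    have hB' : ∑ i : Fin k, (y 0 * (y 0 - y i.succ)⁻¹) * c i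
        = ∏ i : Fin k, (1 - y i.succ / y 0)⁻¹ := by
      rw [← hB]
      refine Finset.sum_congr rfl fun i _ => ?_
      rw [inv_one_sub_div (h0 0)]
      congr 1
      refine Finset.prod_congr rfl fun l _ => by rw [hzz]
    rw [prod_erase_zero k (fun l => (1 - y l / y 0)⁻¹), ← hB', Finset.mul_sum]
    refine Finset.sum_congr rfl fun i _ => ?_
    rw [pow_succ]
    ring
  -- part 2 : pointwise
  have part2 : ∀ i : Fin k, y i.succ ^ m * ∏ l ∈ univ.erase i.succ, (1 - y l / y i.succ)⁻¹
      = y i.succ ^ (m + 1) * (y i.succ - y 0)⁻¹ * c i := by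
    intro i
    rw [prod_erase_succ k i (fun l => (1 - y l / y i.succ)⁻¹),
      inv_one_sub_div (h0 i.succ), pow_succ]
    ring
  calc ∑ b ∈ range (m + 1), y 0 ^ b *
        (∑ i : Fin k, y i.succ ^ (m - b) * c i)
      = ∑ i : Fin k, (∑ b ∈ range (m + 1), y 0 ^ b * y i.succ ^ (m - b)) * c i := by
        simp_rw [Finset.mul_sum]
        rw [Finset.sum_comm]
        refine Finset.sum_congr rfl fun i _ => ?_
        rw [Finset.sum_mul]
        exact Finset.sum_congr rfl fun b _ => by ring
    _ = ∑ i : Fin k, ((y 0 ^ (m + 1) - y i.succ ^ (m + 1)) * (y 0 - y i.succ)⁻¹) * c i := by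
        refine Finset.sum_congr rfl fun i _ => ?_
        congr 1
        rw [eq_mul_inv_iff_mul_eq₀ (hne0 i)]
        exact geom_sum₂_mul (y 0) (y i.succ) (m + 1)
    _ = (∑ i : Fin k, y 0 ^ (m + 1) * (y 0 - y i.succ)⁻¹ * c i)
        + ∑ i : Fin k, y i.succ ^ (m + 1) * (y i.succ - y 0)⁻¹ * c i := by
        rw [← Finset.sum_add_distrib]
        refine Finset.sum_congr rfl fun i _ => ?_
        rw [show (y i.succ - y 0)⁻¹ = -(y 0 - y i.succ)⁻¹ from by
          rw [← neg_sub, inv_neg]]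
        ring
    _ = ∑ i : Fin (k + 1), y i ^ m * ∏ l ∈ univ.erase i, (1 - y l / y i)⁻¹ := by
        rw [Fin.sum_univ_succ, part1]
        congr 1
        refine Finset.sum_congr rfl fun i _ => ?_
        rw [part2 i]

lemma lemA {p : ℕ} (hp : p.Prime) :
    ∀ k : ℕ, 1 ≤ k → ∀ x : Fin k → ℂ,
      Function.Injective (fun i => (p : ℂ) ^ (-x i)) →
      ∀ m : ℕ, sigmaX k x (p ^ m)
        = ∑ i : Fin k, ((p : ℂ) ^ (-x i)) ^ m *
            ∏ l ∈ univ.erase i, (1 - ((p : ℂ) ^ (-x l)) / ((p : ℂ) ^ (-x i)))⁻¹ := by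
  have hpC : (p : ℂ) ≠ 0 := Nat.cast_ne_zero.mpr hp.pos.ne'
  have hY0 : ∀ x0 : ℂ, (p : ℂ) ^ (-x0) ≠ 0 := fun x0 => by
    simp [Complex.cpow_eq_zero_iff, hpC]
  refine Nat.le_induction ?_ ?_
  · intro x hinj m
    rw [sigmaX, Fin.prod_univ_one, powFn_prime_pow _ hp.pos.ne', Fin.sum_univ_one]
    have h : (univ : Finset (Fin 1)).erase 0 = ∅ := by decide
    rw [h, Finset.prod_empty, mul_one]
  · intro k hk IH x hinj m
    have hinj' : Function.Injective (fun i : Fin k => (p : ℂ) ^ (-x i.succ)) :=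
      fun a b e => Fin.succ_injective k (hinj e)
    have hmul : sigmaX (k + 1) x = powFn (x 0) * sigmaX k (fun i => x i.succ) := by
      rw [sigmaX, sigmaX, Fin.prod_univ_succ]
    rw [hmul, mul_apply_prime_pow _ _ hp]
    have hrw : ∀ b ∈ range (m + 1),
        powFn (x 0) (p ^ b) * sigmaX k (fun i => x i.succ) (p ^ (m - b))
        = ((p : ℂ) ^ (-x 0)) ^ b *
          ∑ i : Fin k, ((p : ℂ) ^ (-x i.succ)) ^ (m - b) *
            ∏ l ∈ univ.erase i, (1 - ((p : ℂ) ^ (-x l.succ)) / ((p : ℂ) ^ (-x i.succ)))⁻¹ := by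
      intro b _
      rw [powFn_prime_pow _ hp.pos.ne', IH _ hinj']
    rw [Finset.sum_congr rfl hrw]
    have hne : ∀ i l : Fin (k + 1), i ≠ l →
        (p : ℂ) ^ (-x i) ≠ (p : ℂ) ^ (-x l) := fun i l h e => h (hinj e)
    exact lemStep k hk (fun i => (p : ℂ) ^ (-x i)) (fun i => hY0 (x i)) hne m

lemma final_algebra (k : ℕ) (P T : ℂ) (y c : Fin k → ℂ) (j : ℕ)
    (hP : P - 1 ≠ 0) (hT : T ≠ 0)
    (hE0 : ∑ i : Fin k, c i * y i ^ 0 * (1 - y i * T)⁻¹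
      = ∏ i : Fin k, (1 - y i * T)⁻¹)
    (hne : ∀ i, (1 : ℂ) - y i * T ≠ 0) :
    (∑ i : Fin k, c i * y i ^ j * (1 - y i * T)⁻¹) /
        (∑ i : Fin k, c i * y i ^ 0 * (1 - y i * T)⁻¹)
      + (-(T⁻¹) / (P - 1)) *
        ((∑ i : Fin k, c i * y i ^ (j - 1) * (1 - y i * T)⁻¹) /
            (∑ i : Fin k, c i * y i ^ 0 * (1 - y i * T)⁻¹)
          - T * ((∑ i : Fin k, c i * y i ^ j * (1 - y i * T)⁻¹) /
              (∑ i : Fin k, c i * y i ^ 0 * (1 - y i * T)⁻¹)))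
      = (∏ i : Fin k, ((1 : ℂ) - y i * T)) * (P - 1)⁻¹ *
        ∑ i : Fin k, (P * y i ^ j - T⁻¹ * y i ^ (j - 1)) * (1 - y i * T)⁻¹ * c i := by
  have hQ : ∏ i : Fin k, (1 - y i * T)⁻¹ ≠ 0 :=
    Finset.prod_ne_zero_iff.mpr fun i _ => inv_ne_zero (hne i)
  have hsplit : ∑ i : Fin k, (P * y i ^ j - T⁻¹ * y i ^ (j - 1)) * (1 - y i * T)⁻¹ * c i
      = P * (∑ i : Fin k, c i * y i ^ j * (1 - y i * T)⁻¹)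
        - T⁻¹ * (∑ i : Fin k, c i * y i ^ (j - 1) * (1 - y i * T)⁻¹) := by
    rw [Finset.mul_sum, Finset.mul_sum, ← Finset.sum_sub_distrib]
    exact Finset.sum_congr rfl fun i _ => by ring
  have hprod : ∏ i : Fin k, ((1 : ℂ) - y i * T) = (∏ i : Fin k, (1 - y i * T)⁻¹)⁻¹ := by
    rw [← Finset.prod_inv_distrib]
    exact Finset.prod_congr rfl fun i _ => (inv_inv _).symm
  rw [hE0, hsplit, hprod]
  generalize (∑ i : Fin k, c i * y i ^ j * (1 - y i * T)⁻¹) = A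
  generalize (∑ i : Fin k, c i * y i ^ (j - 1) * (1 - y i * T)⁻¹) = B
  generalize hq : (∏ i : Fin k, ((1:ℂ) - y i * T)⁻¹) = Q at hQ ⊢
  field_simp
  ring

/-- for distinct `x_1,…,x_k`, a prime `p` and `j ≥ 1`, with `s` in the
region of convergence (`Re(s + x_i) > 0` for all `i`),
`G_X(s,p^j) = (∏_i (1 - p^{-s-x_i})) (1/(p-1)) ∑_i (p^{1-x_i j} - p^{s-x_i(j-1)})
(1 - p^{-x_i-s})⁻¹ ∏_{l≠i}(1-p^{x_i-x_l})⁻¹`. -/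
theorem stmt_4 (k : ℕ) (hk : 0 < k) (x : Fin k → ℂ) (hx : Function.Injective x)
    (p : ℕ) (hp : p.Prime) (s : ℂ) (hs : ∀ i : Fin k, 0 < (s + x i).re)
    (hnv : ∀ i l : Fin k, i ≠ l → (1 : ℂ) - (p : ℂ) ^ (x i - x l) ≠ 0)
    (j : ℕ) (hj : 1 ≤ j) :
    GX k x s (p ^ j) =
      (∏ i : Fin k, ((1 : ℂ) - (p : ℂ) ^ (-s - x i))) * (((p : ℂ) - 1)⁻¹) *
        ∑ i : Fin k,
          ((p : ℂ) ^ ((1 : ℂ) - x i * (j : ℂ)) - (p : ℂ) ^ (s - x i * ((j : ℂ) - 1))) *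
            ((1 : ℂ) - (p : ℂ) ^ (-(x i) - s))⁻¹ *
            ∏ l ∈ Finset.univ.erase i, ((1 : ℂ) - (p : ℂ) ^ (x i - x l))⁻¹ := by
  classical
  have hpC : (p : ℂ) ≠ 0 := Nat.cast_ne_zero.mpr hp.pos.ne'
  have hY0 : ∀ x0 : ℂ, (p : ℂ) ^ (-x0) ≠ 0 := fun x0 => by
    simp [Complex.cpow_eq_zero_iff, hpC]
  have ht0 : (p : ℂ) ^ (-s) ≠ 0 := hY0 s
  -- ratio identity
  have hratio : ∀ i l : Fin k,
      (p : ℂ) ^ (x i - x l) = (p : ℂ) ^ (-x l) / (p : ℂ) ^ (-x i) := by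
    intro i l
    have h1 : (p : ℂ) ^ (-x i) = ((p : ℂ) ^ (x i))⁻¹ := Complex.cpow_neg _ _
    rw [sub_eq_add_neg, Complex.cpow_add _ _ hpC, h1, div_eq_mul_inv, inv_inv, mul_comm]
  have hne : ∀ i l : Fin k, i ≠ l → (p : ℂ) ^ (-x i) ≠ (p : ℂ) ^ (-x l) := by
    intro i l hil e
    apply hnv i l hil
    rw [hratio i l, ← e, div_self (hY0 (x i)), sub_self]
  have hinjfun : Function.Injective fun i : Fin k => (p : ℂ) ^ (-x i) := by
    intro a b e
    by_contra h
    exact hne a b h e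
  -- norm facts
  have hyt : ∀ i : Fin k, ‖(p : ℂ) ^ (-x i) * (p : ℂ) ^ (-s)‖ < 1 := by
    intro i
    rw [← Complex.cpow_add _ _ hpC]
    rw [Complex.norm_natCast_cpow_of_pos hp.pos]
    have hre : (-x i + -s).re < 0 := by
      have := hs i
      simp only [Complex.add_re, Complex.neg_re] at *
      linarith
    exact Real.rpow_lt_one_of_one_lt_of_neg (by exact_mod_cast hp.one_lt) hre
  have hsub : ∀ i : Fin k, (1 : ℂ) - (p : ℂ) ^ (-x i) * (p : ℂ) ^ (-s) ≠ 0 := by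
    intro i h
    rw [sub_eq_zero] at h
    have := hyt i
    rw [← h, norm_one] at this
    exact lt_irrefl _ this
  -- the tsum computation
  have htj : ∀ n : ℕ, (p : ℂ) ^ (-(n : ℂ) * s) = ((p : ℂ) ^ (-s)) ^ n := by
    intro n
    rw [neg_mul, ← mul_neg, Complex.cpow_nat_mul]
  have hD : ∀ α : ℕ,
      (∑' n : ℕ, sigmaX k x (p ^ (n + α)) * (p : ℂ) ^ (-(n : ℂ) * s))
        = ∑ i : Fin k,
            (∏ l ∈ univ.erase i, (1 - (p : ℂ) ^ (-x l) / (p : ℂ) ^ (-x i))⁻¹)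
              * ((p : ℂ) ^ (-x i)) ^ α
              * (1 - (p : ℂ) ^ (-x i) * (p : ℂ) ^ (-s))⁻¹ := by
    intro α
    have h1 : ∀ n : ℕ, sigmaX k x (p ^ (n + α)) * (p : ℂ) ^ (-(n : ℂ) * s)
        = ∑ i : Fin k,
            ((∏ l ∈ univ.erase i, (1 - (p : ℂ) ^ (-x l) / (p : ℂ) ^ (-x i))⁻¹)
              * ((p : ℂ) ^ (-x i)) ^ α)
              * ((p : ℂ) ^ (-x i) * (p : ℂ) ^ (-s)) ^ n := by
      intro n
      rw [lemA hp k hk x hinjfun (n + α), htj, Finset.sum_mul]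
      refine Finset.sum_congr rfl fun i _ => ?_
      rw [pow_add, mul_pow]
      ring
    rw [tsum_congr h1,
      Summable.tsum_finsetSum (fun i _ => (summable_geometric_of_norm_lt_one (hyt i)).mul_left _)]
    refine Finset.sum_congr rfl fun i _ => ?_
    rw [tsum_mul_left, tsum_geometric_of_norm_lt_one (hyt i), mul_assoc]
  -- E 0 as a product (partial fractions)
  have hE0 : ∑ i : Fin k,
      (∏ l ∈ univ.erase i, (1 - (p : ℂ) ^ (-x l) / (p : ℂ) ^ (-x i))⁻¹)
        * ((p : ℂ) ^ (-x i)) ^ 0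
        * (1 - (p : ℂ) ^ (-x i) * (p : ℂ) ^ (-s))⁻¹
      = ∏ i : Fin k, (1 - (p : ℂ) ^ (-x i) * (p : ℂ) ^ (-s))⁻¹ := by
    have hz0 : ∀ i : Fin k, (p : ℂ) ^ (-x i) * (p : ℂ) ^ (-s) ≠ 0 :=
      fun i => mul_ne_zero (hY0 (x i)) ht0
    have hzinj : Function.Injective fun i : Fin k => (p : ℂ) ^ (-x i) * (p : ℂ) ^ (-s) := by
      intro a b e
      exact hinjfun (mul_right_cancel₀ ht0 e)
    have hz1 : ∀ i : Fin k, (p : ℂ) ^ (-x i) * (p : ℂ) ^ (-s) ≠ 1 := by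
      intro i e
      have := hyt i
      rw [e, norm_one] at this
      exact lt_irrefl _ this
    have hB := lemB k hk (fun i => (p : ℂ) ^ (-x i) * (p : ℂ) ^ (-s)) hz0 hzinj hz1
    rw [← hB]
    refine Finset.sum_congr rfl fun i _ => ?_
    rw [pow_zero, mul_one]
    rw [show (∏ l ∈ univ.erase i,
        (1 - ((p : ℂ) ^ (-x l) * (p : ℂ) ^ (-s)) / ((p : ℂ) ^ (-x i) * (p : ℂ) ^ (-s)))⁻¹)
        = ∏ l ∈ univ.erase i, (1 - (p : ℂ) ^ (-x l) / (p : ℂ) ^ (-x i))⁻¹ from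
      Finset.prod_congr rfl fun l _ => by rw [mul_div_mul_right _ _ ht0]]
    ring
  have hE0ne : (∑ i : Fin k,
      (∏ l ∈ univ.erase i, (1 - (p : ℂ) ^ (-x l) / (p : ℂ) ^ (-x i))⁻¹)
        * ((p : ℂ) ^ (-x i)) ^ 0
        * (1 - (p : ℂ) ^ (-x i) * (p : ℂ) ^ (-s))⁻¹) ≠ 0 := by
    rw [hE0]
    exact Finset.prod_ne_zero_iff.mpr fun i _ => inv_ne_zero (hsub i)
  -- gX at prime powers
  have hgx : ∀ α : ℕ, gX k x s (p ^ α)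
      = (∑ i : Fin k,
          (∏ l ∈ univ.erase i, (1 - (p : ℂ) ^ (-x l) / (p : ℂ) ^ (-x i))⁻¹)
            * ((p : ℂ) ^ (-x i)) ^ α
            * (1 - (p : ℂ) ^ (-x i) * (p : ℂ) ^ (-s))⁻¹)
        / (∑ i : Fin k,
          (∏ l ∈ univ.erase i, (1 - (p : ℂ) ^ (-x l) / (p : ℂ) ^ (-x i))⁻¹)
            * ((p : ℂ) ^ (-x i)) ^ 0
            * (1 - (p : ℂ) ^ (-x i) * (p : ℂ) ^ (-s))⁻¹) := by
    intro α
    match α with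
    | 0 =>
      rw [pow_zero, div_self hE0ne, gX]
      rw [Nat.primeFactors_one]
      exact Finset.prod_empty
    | (a + 1) =>
      rw [gX, Nat.primeFactors_prime_pow (Nat.succ_ne_zero a) hp,
        Finset.prod_singleton, hp.factorization_pow, Finsupp.single_eq_same]
      rw [show (∑' n : ℕ, sigmaX k x (p ^ n) * (p : ℂ) ^ (-(n : ℂ) * s))
          = ∑' n : ℕ, sigmaX k x (p ^ (n + 0)) * (p : ℂ) ^ (-(n : ℂ) * s) from
        tsum_congr fun n => by rw [add_zero]]
      rw [hD (a + 1), hD 0]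
  -- GX expansion at p^j
  have hppow : p ^ j / p = p ^ (j - 1) := by
    have h := Nat.pow_div hj hp.pos
    rwa [pow_one] at h
  have hsinv : (p : ℂ) ^ s = ((p : ℂ) ^ (-s))⁻¹ := by
    rw [Complex.cpow_neg, inv_inv]
  have hμ0 : ∀ a : ℕ, 2 ≤ a → (moebius (p ^ a) : ℤ) = 0 := fun a ha => by
    rw [ArithmeticFunction.moebius_apply_prime_pow hp (by omega : a ≠ 0),
      if_neg (by omega)]
  have hGX : GX k x s (p ^ j)
      = gX k x s (p ^ j) + (-(((p : ℂ) ^ (-s))⁻¹) / ((p : ℂ) - 1)) *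
        (gX k x s (p ^ (j - 1)) - (p : ℂ) ^ (-s) * gX k x s (p ^ j)) := by
    rw [GX, Nat.sum_divisors_prime_pow hp]
    have hvanish : ∀ a ∈ range (j + 1), a ∉ range 2 →
        ((moebius (p ^ a) : ℂ) * ((p ^ a : ℕ) : ℂ) ^ s / (Nat.totient (p ^ a) : ℂ)) *
          ∑ e ∈ (p ^ a).divisors,
            ((moebius e : ℂ) / (e : ℂ) ^ s) * gX k x s (p ^ j * e / p ^ a) = 0 := by
      intro a _ ha2
      rw [Finset.mem_range, not_lt] at ha2
      rw [hμ0 a ha2]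
      simp
    rw [← Finset.sum_subset (Finset.range_subset_range.mpr (by omega : 2 ≤ j + 1)) hvanish]
    rw [Finset.sum_range_succ, Finset.sum_range_one, pow_zero, pow_one]
    have hF1 : ((moebius 1 : ℂ) * ((1 : ℕ) : ℂ) ^ s / (Nat.totient 1 : ℂ)) *
        ∑ e ∈ (1 : ℕ).divisors,
          ((moebius e : ℂ) / (e : ℂ) ^ s) * gX k x s (p ^ j * e / 1) = gX k x s (p ^ j) := by
      simp [ArithmeticFunction.moebius_apply_one, Nat.divisors_one, Complex.one_cpow]
    have hFp : ((moebius p : ℂ) * (p : ℂ) ^ s / (Nat.totient p : ℂ)) *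
        ∑ e ∈ p.divisors,
          ((moebius e : ℂ) / (e : ℂ) ^ s) * gX k x s (p ^ j * e / p)
        = (-(((p : ℂ) ^ (-s))⁻¹) / ((p : ℂ) - 1)) *
          (gX k x s (p ^ (j - 1)) - (p : ℂ) ^ (-s) * gX k x s (p ^ j)) := by
      rw [Nat.Prime.divisors hp,
        Finset.sum_insert (by simp only [Finset.mem_singleton]; exact hp.one_lt.ne), Finset.sum_singleton,
        ArithmeticFunction.moebius_apply_one, ArithmeticFunction.moebius_apply_prime hp,
        Nat.totient_prime hp, Nat.mul_one, hppow, Nat.mul_div_cancel _ hp.pos]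
      push_cast [Nat.cast_sub hp.one_le]
      rw [Complex.one_cpow, hsinv]
      field_simp
      ring
    rw [hF1, hFp]
  -- final assembly
  have hPne : (p : ℂ) - 1 ≠ 0 := sub_ne_zero.mpr (by exact_mod_cast hp.one_lt.ne')
  have hRHSprod : (∏ i : Fin k, ((1 : ℂ) - (p : ℂ) ^ (-s - x i)))
      = ∏ i : Fin k, ((1 : ℂ) - (p : ℂ) ^ (-x i) * (p : ℂ) ^ (-s)) :=
    Finset.prod_congr rfl fun i _ => by
      rw [show -s - x i = -x i + -s from by ring, Complex.cpow_add _ _ hpC]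
  have hRHSsum : (∑ i : Fin k,
        ((p : ℂ) ^ ((1 : ℂ) - x i * (j : ℂ)) - (p : ℂ) ^ (s - x i * ((j : ℂ) - 1))) *
          ((1 : ℂ) - (p : ℂ) ^ (-(x i) - s))⁻¹ *
          ∏ l ∈ Finset.univ.erase i, ((1 : ℂ) - (p : ℂ) ^ (x i - x l))⁻¹)
      = ∑ i : Fin k,
          ((p : ℂ) * ((p : ℂ) ^ (-x i)) ^ j
              - ((p : ℂ) ^ (-s))⁻¹ * ((p : ℂ) ^ (-x i)) ^ (j - 1)) *
            ((1 : ℂ) - (p : ℂ) ^ (-x i) * (p : ℂ) ^ (-s))⁻¹ *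
            ∏ l ∈ univ.erase i, (1 - (p : ℂ) ^ (-x l) / (p : ℂ) ^ (-x i))⁻¹ := by
    refine Finset.sum_congr rfl fun i _ => ?_
    have hB1 : (p : ℂ) ^ ((1 : ℂ) - x i * (j : ℂ)) = (p : ℂ) * ((p : ℂ) ^ (-x i)) ^ j := by
      rw [show (1 : ℂ) - x i * (j : ℂ) = 1 + (j : ℕ) * (-x i) from by push_cast; ring,
        Complex.cpow_add _ _ hpC, Complex.cpow_one, Complex.cpow_nat_mul]
    have hB2 : (p : ℂ) ^ (s - x i * ((j : ℂ) - 1))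
        = ((p : ℂ) ^ (-s))⁻¹ * ((p : ℂ) ^ (-x i)) ^ (j - 1) := by
      rw [show s - x i * ((j : ℂ) - 1) = s + ((j - 1 : ℕ) : ℂ) * (-x i) from by
          push_cast [Nat.cast_sub hj]; ring,
        Complex.cpow_add _ _ hpC, Complex.cpow_nat_mul, hsinv]
    have hA' : (p : ℂ) ^ (-(x i) - s) = (p : ℂ) ^ (-x i) * (p : ℂ) ^ (-s) := by
      rw [sub_eq_add_neg, Complex.cpow_add _ _ hpC]
    rw [hB1, hB2, hA']
    congr 1
    refine Finset.prod_congr rfl fun l _ => by rw [hratio]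
  rw [hGX, hgx j, hgx (j - 1), hRHSprod, hRHSsum]
  exact final_algebra k (p : ℂ) ((p : ℂ) ^ (-s)) (fun i => (p : ℂ) ^ (-x i))
    (fun i => ∏ l ∈ univ.erase i, (1 - (p : ℂ) ^ (-x l) / (p : ℂ) ^ (-x i))⁻¹) j
    hPne ht0 hE0 hsub
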